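/- For every idempotent f ∈ A and every x ∈ J there exist a, b ∈ 1 + J and y ∈ J with fy = yf = 0 such that f + y = a·(f + x)·b. -/

import Mathlib

/-!
With `e = 1 - f`, view `f + x` as a 2×2 block matrix for the Peirce decomposition of `A` along
`f` and `e`. Its `f`-corner `f + f x f = f (1 + f x f)` is invertible in the corner ring `f A f`,
because `f x f` lies in the radical. Block Gaussian elimination with unitriangular factors
clears the off-diagonal blocks `f x e` and `e x f`, and the corner inverse turns the `f`-corner
into `f`. What remains in the `e`-corner is the Schur complement `y = e (x - x p x) e`, with `p`
the corner inverse; it lies in `J`, as do the factors minus `1`.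
-/

theorem Ideal.isUnit_one_add_of_mem_jacobson_bot {R : Type*} [Ring R] {j : R}
    (hj : j ∈ (⊥ : Ideal R).jacobson) : IsUnit (1 + j) := by
  have left_inv : ∀ k ∈ (⊥ : Ideal R).jacobson, ∃ z, z * (1 + k) = 1 := fun k hk => by
    obtain ⟨z, hz⟩ := exists_mul_add_sub_mem_of_mem_jacobson k hk
    exact ⟨z, by rwa [mem_bot, sub_eq_zero, add_comm] at hz⟩
  obtain ⟨z, hz⟩ := left_inv j hj
  have hz1 : z - 1 ∈ (⊥ : Ideal R).jacobson := by
    have : z - 1 = -(z * j) := by rw [← hz]; noncomm_ring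
    exact this ▸ neg_mem (mul_mem_left _ z hj)
  obtain ⟨w, hw⟩ := left_inv (z - 1) hz1
  rw [add_sub_cancel] at hw
  obtain rfl : w = 1 + j := left_inv_eq_right_inv hw hz
  exact isUnit_iff_exists.2 ⟨z, hw, hz⟩

section Corner

variable {A : Type*} [Ring A] {f p x : A}

/-- `p` is the inverse of `f * m * f` in the corner ring `f A f`, whose identity is `f`. -/
def IsCornerInverse (f m p : A) : Prop :=
  f * p = p ∧ p * f = p ∧ p * m * f = f ∧ f * m * p = f

theorem IsIdempotentElem.isCornerInverse_mul_inv (hf : IsIdempotentElem f) (u : Aˣ)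
    (hu : (u : A) = 1 + f * x * f) : IsCornerInverse f (f + x) (f * ↑u⁻¹) := by
  have hcomm : Commute f u := by
    rw [hu]
    refine (Commute.one_right f).add_right ?_
    simp only [Commute, SemiconjBy, ← mul_assoc, hf.eq]
    rw [mul_assoc _ f f, hf.eq]
  have hfu : f * (f + x) * f = f * u := by
    rw [hu]; simp only [mul_add, add_mul, mul_one, ← mul_assoc, hf.eq]
  have hinv : Commute f ↑u⁻¹ := hcomm.units_inv_right
  refine ⟨by rw [← mul_assoc, hf.eq], by rw [mul_assoc, ← hinv.eq, ← mul_assoc, hf.eq], ?_, ?_⟩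
  · rw [hinv.eq, mul_assoc, mul_assoc, ← mul_assoc f, hfu, hcomm.eq, ← mul_assoc, u.inv_mul,
      one_mul]
  · rw [← mul_assoc, hfu, mul_assoc, u.mul_inv, mul_one]

theorem IsCornerInverse.block_elimination (hf : IsIdempotentElem f)
    (h : IsCornerInverse f (f + x) p) :
    (p + (1 - f) - (1 - f) * x * p) * (f + x) * (1 - p * x * (1 - f)) =
      f + (1 - f) * (x - x * p * x) * (1 - f) := by
  obtain ⟨hfp, hpf, hl, hr⟩ := h
  have hpxf : p * (x * f) = f - p := calc
    p * (x * f) = p * (f + x) * f - p * f * f := by noncomm_ring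
    _ = f - p := by rw [hl, mul_assoc, hf.eq, hpf]
  have hfxp : f * (x * p) = f - p := calc
    f * (x * p) = f * (f + x) * p - f * f * p := by noncomm_ring
    _ = f - p := by rw [hr, hf.eq, hfp]
  have hpxp : p * (x * p) = p - p * p := calc
    p * (x * p) = p * (x * f) * p := by rw [mul_assoc, mul_assoc, hfp]
    _ = p - p * p := by rw [hpxf, sub_mul, hfp]
  have hfp' : ∀ t, f * (p * t) = p * t := fun t => by rw [← mul_assoc, hfp]
  have hfxp' : ∀ t, f * (x * (p * t)) = (f - p) * t := fun t => by
    rw [← hfxp]; simp only [mul_assoc]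
  have hpxp' : ∀ t, p * (x * (p * t)) = (p - p * p) * t := fun t => by
    rw [← hpxp]; simp only [mul_assoc]
  -- these relations reduce every word in `f`, `p`, `x` to a normal form
  simp only [mul_add, add_mul, mul_sub, sub_mul, mul_one, one_mul, mul_assoc, hf.eq, hfp, hpf,
    hpxf, hfxp, hpxp, hfp', hfxp', hpxp']
  abel

end Corner

theorem exists_translate_orthogonal_to_idempotent
    {A : Type*} [Ring A]
    (J : Ideal A) (hJ : J = (⊥ : Ideal A).jacobson)
    (f : A) (hf : IsIdempotentElem f) (x : A) (hx : x ∈ J) :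
    ∃ a b y : A, a - 1 ∈ J ∧ b - 1 ∈ J ∧ y ∈ J ∧
      f * y = 0 ∧ y * f = 0 ∧ f + y = a * (f + x) * b := by
  subst hJ
  have hfxf : f * x * f ∈ (⊥ : Ideal A).jacobson :=
    Ideal.mul_mem_right f _ (Ideal.mul_mem_left _ f hx)
  obtain ⟨u, hu⟩ := Ideal.isUnit_one_add_of_mem_jacobson_bot hfxf
  set p := f * (↑u⁻¹ : A)
  have hp : IsCornerInverse f (f + x) p := hf.isCornerInverse_mul_inv u hu
  have hpf : p - f ∈ (⊥ : Ideal A).jacobson := by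
    have : p - f = -(p * (f * x * f)) := by
      rw [show f * x * f = ↑u - 1 by rw [hu]; abel, mul_sub, mul_assoc, u.inv_mul, mul_one, mul_one]
      abel
    exact this ▸ neg_mem (Ideal.mul_mem_left _ p hfxf)
  refine ⟨p + (1 - f) - (1 - f) * x * p, 1 - p * x * (1 - f),
    (1 - f) * (x - x * p * x) * (1 - f), ?_, ?_, ?_, ?_, ?_, (hp.block_elimination hf).symm⟩
  · rw [show p + (1 - f) - (1 - f) * x * p - 1 = (p - f) - (1 - f) * x * p by abel]
    exact sub_mem hpf (Ideal.mul_mem_right _ _ (Ideal.mul_mem_left _ _ hx))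
  · rw [sub_sub_cancel_left]
    exact neg_mem (Ideal.mul_mem_right _ _ (Ideal.mul_mem_left _ _ hx))
  · exact Ideal.mul_mem_right _ _ (Ideal.mul_mem_left _ _ (sub_mem hx (Ideal.mul_mem_left _ _ hx)))
  · rw [← mul_assoc, ← mul_assoc, hf.mul_one_sub_self, zero_mul, zero_mul]
  · rw [mul_assoc, hf.one_sub_mul_self, mul_zero]
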